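/- arXiv:2602.19302 — 4 statements merged into one kernel-verified Lean document; each statement's English description precedes it below -/
import Mathlib

section
/- For 0 < e < 1, 0 < q, q ≠ e², and any real Θ, the equation e·sin θ + e√q·sin Θ = √q·sin(θ - Θ) in the unknown unit vector (cos θ, sin θ) has exactly the two solutions given by cos θ_j = (−sin²Θ + (−1)^{j−1}(cos Θ − e/√q)·A)/(e·B) and sin θ_j = sin Θ·(cos Θ − e/√q + (−1)^{j−1}A)/(e·B) for j = 1,2, where B = 1/e² + 1/q − 2cos Θ/(e√q) and A = √(B − sin²Θ). -/
open Real

/-!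
Dividing by `√q`, the equation is the linear condition
`sin Θ · c - (cos Θ - e/√q) · s = -e sin Θ`, so the solutions are the points where a line meets the
unit circle. The normal vector of the line has squared length `e² B`, and the discriminant
`e² B - e² sin² Θ` of the intersection equals `(e A)²`; it is nonnegative as
`e² B = sin² Θ + (cos Θ - e/√q)² ≥ sin² Θ ≥ e² sin² Θ`.
-/

/-- For `t = a y - b x`, the coordinate along the line,
`(a² + b²) • (x, y) = (a c - b t, b c + a t)` and `(a² + b²) (x² + y²) = c² + t²`;
so on the unit circle `t = ± r`. -/
theorem unitCircle_inter_line {a b c r : ℝ} (hab : a ^ 2 + b ^ 2 ≠ 0)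
    (hr : r ^ 2 = a ^ 2 + b ^ 2 - c ^ 2) :
    {p : ℝ × ℝ | p.1 ^ 2 + p.2 ^ 2 = 1 ∧ a * p.1 + b * p.2 = c} =
      {((a * c - b * r) / (a ^ 2 + b ^ 2), (b * c + a * r) / (a ^ 2 + b ^ 2)),
       ((a * c + b * r) / (a ^ 2 + b ^ 2), (b * c - a * r) / (a ^ 2 + b ^ 2))} := by
  ext ⟨x, y⟩
  simp only [Set.mem_ofPred_eq, Set.mem_insert_iff, Set.mem_singleton_iff, Prod.mk.injEq]
  constructor
  · rintro ⟨hcircle, hline⟩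
    have ht : (a * y - b * x - r) * (a * y - b * x + r) = 0 := by
      linear_combination (a ^ 2 + b ^ 2) * hcircle - (a * x + b * y + c) * hline - hr
    rw [eq_div_iff hab, eq_div_iff hab, eq_div_iff hab, eq_div_iff hab]
    rcases mul_eq_zero.mp ht with ht | ht <;> [left; right] <;>
      exact ⟨by linear_combination a * hline - b * ht, by linear_combination b * hline + a * ht⟩
  · rintro (⟨rfl, rfl⟩ | ⟨rfl, rfl⟩) <;> exact
      ⟨by rw [div_pow, div_pow, ← add_div, div_eq_one_iff_eq (pow_ne_zero 2 hab)]
          linear_combination (a ^ 2 + b ^ 2) * hr,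
        by rw [mul_div_assoc', mul_div_assoc', ← add_div, div_eq_iff hab]; ring⟩

theorem sin_sq_add_cos_sub_sq_pos (θ : ℝ) {k : ℝ} (hk : k ^ 2 ≠ 1) :
    0 < sin θ ^ 2 + (cos θ - k) ^ 2 := by
  by_contra! h
  have hsin : sin θ = 0 := by nlinarith [sq_nonneg (sin θ), sq_nonneg (cos θ - k)]
  have hcos : cos θ = k := by nlinarith [sq_nonneg (sin θ), sq_nonneg (cos θ - k)]
  exact hk (by rw [← hcos, cos_sq', hsin]; ring)

theorem sin_sq_add_cos_sub_div_sq {e s : ℝ} (he : e ≠ 0) (hs : s ≠ 0) (θ : ℝ) :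
    sin θ ^ 2 + (cos θ - e / s) ^ 2 = e ^ 2 * (1 / e ^ 2 + 1 / s ^ 2 - 2 * cos θ / (e * s)) := by
  field_simp
  linear_combination s ^ 2 * sin_sq_add_cos_sq θ

theorem mul_sin_add_mul_sin_eq_mul_sin_sub_iff {e s : ℝ} (hs : s ≠ 0) (Θ x y : ℝ) :
    e * y + e * s * sin Θ = s * (y * cos Θ - x * sin Θ) ↔
      sin Θ * x + -(cos Θ - e / s) * y = -(e * sin Θ) := by
  rw [← mul_right_inj' hs (b := sin Θ * x + _)]
  have hsD : s * (cos Θ - e / s) = s * cos Θ - e := by field_simp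
  exact ⟨fun h ↦ by linear_combination h - y * hsD, fun h ↦ by linear_combination h + y * hsD⟩

theorem stmt5 (e q Θ : ℝ) (he0 : 0 < e) (he1 : e < 1) (hq : 0 < q) (hqe : q ≠ e ^ 2)
    (B A : ℝ)
    (hB : B = 1 / e ^ 2 + 1 / q - 2 * cos Θ / (e * sqrt q))
    (hA : A = sqrt (B - sin Θ ^ 2)) :
    {p : ℝ × ℝ | p.1 ^ 2 + p.2 ^ 2 = 1 ∧
        e * p.2 + e * sqrt q * sin Θ = sqrt q * (p.2 * cos Θ - p.1 * sin Θ)} =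
      {((-sin Θ ^ 2 + (cos Θ - e / sqrt q) * A) / (e * B),
         sin Θ * (cos Θ - e / sqrt q + A) / (e * B)),
       ((-sin Θ ^ 2 - (cos Θ - e / sqrt q) * A) / (e * B),
         sin Θ * (cos Θ - e / sqrt q - A) / (e * B))} := by
  obtain ⟨s, hs, rfl⟩ : ∃ s, 0 < s ∧ q = s ^ 2 := ⟨√q, sqrt_pos.2 hq, (sq_sqrt hq.le).symm⟩
  rw [sqrt_sq hs.le] at *
  have hN : sin Θ ^ 2 + (cos Θ - e / s) ^ 2 = e ^ 2 * B :=
    hB ▸ sin_sq_add_cos_sub_div_sq he0.ne' hs.ne' Θ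
  have hpos : 0 < sin Θ ^ 2 + (cos Θ - e / s) ^ 2 := by
    refine sin_sq_add_cos_sub_sq_pos Θ ?_
    rwa [div_pow, Ne, div_eq_one_iff_eq (by positivity), eq_comm]
  have hB0 : 0 < B := pos_of_mul_pos_right (hN ▸ hpos) (sq_nonneg e)
  have hsinB : sin Θ ^ 2 ≤ B := by
    refine le_of_mul_le_mul_left ?_ (by positivity : 0 < e ^ 2)
    calc e ^ 2 * sin Θ ^ 2 ≤ sin Θ ^ 2 :=
          mul_le_of_le_one_left (sq_nonneg _) (pow_le_one₀ he0.le he1.le)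
      _ ≤ e ^ 2 * B := hN ▸ le_add_of_nonneg_right (sq_nonneg _)
  have hr : (e * A) ^ 2 = sin Θ ^ 2 + (-(cos Θ - e / s)) ^ 2 - (-(e * sin Θ)) ^ 2 := by
    rw [mul_pow, hA, sq_sqrt (sub_nonneg.2 hsinB)]
    linear_combination -hN
  simp only [mul_sin_add_mul_sin_eq_mul_sin_sub_iff hs.ne',
    unitCircle_inter_line (by rw [neg_sq]; exact hpos.ne') hr, neg_sq, hN]
  refine congr_arg₂ insert (congr_arg₂ Prod.mk ?_ ?_)
      (congr_arg singleton (congr_arg₂ Prod.mk ?_ ?_)) <;>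
    rw [div_eq_div_iff (by positivity) (by positivity)] <;> ring
end

section
/- Let q ∈ (0,1) and set θ_q = arccos √q and θ̃_q = π − θ_q. Suppose g : ℝ → ℝ is C¹, 2π-periodic, and there exist θ₁ ∈ (0, θ̃_q) and θ₂ ∈ (θ̃_q, π) such that |g(t)| < min(h(θ₁), h(θ₂)) and h'(θ₂) < g'(t) < min(h'(0), h'(θ₁)) for all t, where h(t) = √q·sin t/(1+√q·cos t). Then for every Θ ∈ ℝ, the equation g(θ) = h(θ − Θ) has exactly one solution θ with θ − Θ ∈ (−θ₁, θ₁) and exactly one solution with θ − Θ ∈ (θ₂, 2π − θ₂), and no solutions with θ − Θ ∈ [θ₁, θ₂] ∪ [2π − θ₂, 2π − θ₁] (mod 2π). -/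
/-!
Write `G s = g (s + Θ)` and `r = √q`, so that `h' = φ ∘ cos` with
`φ c = r (c + r) / (1 + r c)²`. On `[-θ₁, θ₁]` the cosine stays in `[cos θ₁, 1]`, where `φ` is
bounded below by its values at the endpoints, so `h - G` is strictly increasing there, and it
changes sign since `|G| < h θ₁`. On `[θ₂, 2π - θ₂]` the cosine stays below `cos θ₂ < -r`, where
`φ` is increasing, so `G - h` is strictly increasing and changes sign. On the remaining arcs
`|h| ≥ min (h θ₁) (h θ₂) > |G|`, because `h` is unimodal on `[0, π]` with its peak at `θ̃_q` and
is odd about `0` and about `π`.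
-/

open Real Set

noncomputable def sinRatio (r t : ℝ) : ℝ := r * sin t / (1 + r * cos t)

/-- The derivative of `sinRatio r` at `t`, as a function of `c = cos t`. -/
noncomputable def sinRatioDeriv (r c : ℝ) : ℝ := r * (c + r) / (1 + r * c) ^ 2

/-- The point `θ̃ = π - arccos r` where `sinRatio r` is maximal on `[0, π]`. -/
noncomputable def sinRatioPeak (r : ℝ) : ℝ := π - arccos r

lemma StrictMonoOn.existsUnique_mem_Ioo_eq {f : ℝ → ℝ} {a b y : ℝ} (hab : a ≤ b)
    (hf : StrictMonoOn f (Icc a b)) (hcont : ContinuousOn f (Icc a b)) (ha : f a < y)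
    (hb : y < f b) : ∃! x, x ∈ Ioo a b ∧ f x = y := by
  obtain ⟨x, hx, hfx⟩ := intermediate_value_Ioo hab hcont ⟨ha, hb⟩
  refine ⟨x, ⟨hx, hfx⟩, fun x' ⟨hx', hfx'⟩ => ?_⟩
  exact hf.injOn (Ioo_subset_Icc_self hx') (Ioo_subset_Icc_self hx) (hfx'.trans hfx.symm)

lemma cos_le_cos_of_abs_le {x y : ℝ} (hxy : |x| ≤ y) (hy : y ≤ π) : cos y ≤ cos x := by
  rw [← cos_abs x]
  exact cos_le_cos_of_nonneg_of_le_pi (abs_nonneg x) hy hxy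

lemma cos_le_cos_of_abs_sub_pi_le {x y : ℝ} (hxy : |x - π| ≤ π - y) (hy : 0 ≤ y) :
    cos x ≤ cos y := by
  have := cos_le_cos_of_abs_le hxy (by linarith)
  rwa [cos_sub_pi, cos_pi_sub, neg_le_neg_iff] at this

lemma sinRatioPeak_mem_Icc (r : ℝ) : sinRatioPeak r ∈ Icc 0 π :=
  ⟨sub_nonneg.2 (arccos_le_pi r), sub_le_self π (arccos_nonneg r)⟩

lemma cos_sinRatioPeak {r : ℝ} (h₁ : -1 ≤ r) (h₂ : r ≤ 1) :
    cos (sinRatioPeak r) = -r := by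
  rw [sinRatioPeak, cos_pi_sub, cos_arccos h₁ h₂]

lemma neg_lt_cos_of_lt_sinRatioPeak {r θ : ℝ} (h₁ : -1 ≤ r) (h₂ : r ≤ 1)
    (hθ : θ ∈ Ico 0 (sinRatioPeak r)) :
    -r < cos θ := by
  have hpeak := sinRatioPeak_mem_Icc r
  rw [← cos_sinRatioPeak h₁ h₂]
  exact strictAntiOn_cos ⟨hθ.1, hθ.2.le.trans hpeak.2⟩ hpeak hθ.2

lemma cos_lt_neg_of_sinRatioPeak_lt {r θ : ℝ} (h₁ : -1 ≤ r) (h₂ : r ≤ 1)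
    (hθ : θ ∈ Ioc (sinRatioPeak r) π) :
    cos θ < -r := by
  have hpeak := sinRatioPeak_mem_Icc r
  rw [← cos_sinRatioPeak h₁ h₂]
  exact strictAntiOn_cos hpeak ⟨hpeak.1.trans hθ.1.le, hθ.2⟩ hθ.1

lemma one_add_mul_pos_of_lt_one {r c : ℝ} (hr0 : 0 ≤ r) (hr1 : r < 1) (hc : -1 ≤ c) :
    0 < 1 + r * c := by
  nlinarith

lemma sinRatio_neg (r t : ℝ) : sinRatio r (-t) = -sinRatio r t := by
  simp only [sinRatio, sin_neg, cos_neg]; ring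

lemma sinRatio_two_pi_sub (r t : ℝ) : sinRatio r (2 * π - t) = -sinRatio r t := by
  rw [sub_eq_neg_add, sinRatio, sin_add_two_pi, cos_add_two_pi, ← sinRatio, sinRatio_neg]

lemma hasDerivAt_sinRatio {r : ℝ} (hr0 : 0 ≤ r) (hr1 : r < 1) (t : ℝ) :
    HasDerivAt (sinRatio r) (sinRatioDeriv r (cos t)) t := by
  have hd := ((hasDerivAt_sin t).const_mul r).div
    (((hasDerivAt_cos t).const_mul r).const_add 1)
    (one_add_mul_pos_of_lt_one hr0 hr1 (neg_one_le_cos t)).ne'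
  have heq : sinRatioDeriv r (cos t)
      = (r * cos t * (1 + r * cos t) - r * sin t * (r * -sin t)) / (1 + r * cos t) ^ 2 := by
    rw [sinRatioDeriv]
    congr 1
    linear_combination -r ^ 2 * sin_sq_add_cos_sq t
  rw [heq]
  exact hd

lemma deriv_sinRatio {r : ℝ} (hr0 : 0 ≤ r) (hr1 : r < 1) (t : ℝ) :
    deriv (sinRatio r) t = sinRatioDeriv r (cos t) :=
  (hasDerivAt_sinRatio hr0 hr1 t).deriv

lemma differentiable_sinRatio {r : ℝ} (hr0 : 0 ≤ r) (hr1 : r < 1) :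
    Differentiable ℝ (sinRatio r) :=
  fun t => (hasDerivAt_sinRatio hr0 hr1 t).differentiableAt

lemma min_sinRatioDeriv_le {r a c : ℝ} (hr0 : 0 ≤ r) (hr1 : r < 1) (har : -r < a)
    (hac : a ≤ c) (hc1 : c ≤ 1) :
    min (sinRatioDeriv r 1) (sinRatioDeriv r a) ≤ sinRatioDeriv r c := by
  have hda : 0 < 1 + r * a := one_add_mul_pos_of_lt_one hr0 hr1 (by linarith)
  have hdc : 0 < 1 + r * c := one_add_mul_pos_of_lt_one hr0 hr1 (by linarith)
  have hd1 : 0 < 1 + r * 1 := by linarith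
  -- `φ c - φ a` has the sign of `(c - a) K(a, c)`, with `K` below decreasing in each argument on
  -- `[-r, 1]`; so `φ` increases and then decreases there.
  rcases le_or_gt 0 (1 - 2 * r ^ 2 - r ^ 2 * (a * c) - r ^ 3 * (a + c)) with hK | hK
  · refine (min_le_right _ _).trans ?_
    rw [sinRatioDeriv, sinRatioDeriv, div_le_div_iff₀ (by positivity) (by positivity)]
    nlinarith [mul_nonneg (mul_nonneg (sub_nonneg.2 hac) hK) hr0]
  · have hK' : 1 - 2 * r ^ 2 - r ^ 2 * (c * 1) - r ^ 3 * (c + 1) < 0 := by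
      nlinarith [mul_nonneg (mul_nonneg (by linarith : (0 : ℝ) ≤ 1 - a)
        (by linarith : (0 : ℝ) ≤ c + r)) (sq_nonneg r)]
    refine (min_le_left _ _).trans ?_
    rw [sinRatioDeriv, sinRatioDeriv, div_le_div_iff₀ (by positivity) (by positivity)]
    nlinarith [mul_nonneg (mul_nonneg (sub_nonneg.2 hc1) (neg_pos.2 hK').le) hr0]

lemma sinRatioDeriv_le_sinRatioDeriv {r b c : ℝ} (hr0 : 0 ≤ r) (hr1 : r < 1) (hc1 : -1 ≤ c)
    (hcb : c ≤ b) (hbr : b ≤ -r) : sinRatioDeriv r c ≤ sinRatioDeriv r b := by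
  have hdb : 0 < 1 + r * b := one_add_mul_pos_of_lt_one hr0 hr1 (hc1.trans hcb)
  have hdc : 0 < 1 + r * c := one_add_mul_pos_of_lt_one hr0 hr1 hc1
  have hK : 0 < 1 - 2 * r ^ 2 - r ^ 2 * (c * b) - r ^ 3 * (c + b) := by
    nlinarith [mul_nonneg (mul_nonneg (by linarith : (0 : ℝ) ≤ b + 1)
        (by linarith : (0 : ℝ) ≤ -(c + r))) (sq_nonneg r),
      mul_nonneg (mul_nonneg (by linarith : (0 : ℝ) ≤ c + 1)
        (by linarith : (0 : ℝ) ≤ 1 - r)) (sq_nonneg r),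
      mul_pos (mul_pos (by linarith : (0 : ℝ) < 1 - r) (by linarith : (0 : ℝ) < 1 - r))
        (by linarith : (0 : ℝ) < 1 + 2 * r)]
  rw [sinRatioDeriv, sinRatioDeriv, div_le_div_iff₀ (by positivity) (by positivity)]
  nlinarith [mul_nonneg (mul_nonneg (sub_nonneg.2 hcb) hK.le) hr0]

lemma monotoneOn_sinRatio {r : ℝ} (hr0 : 0 ≤ r) (hr1 : r < 1) :
    MonotoneOn (sinRatio r) (Icc 0 (sinRatioPeak r)) := by
  have hpeak := sinRatioPeak_mem_Icc r
  refine monotoneOn_of_deriv_nonneg (convex_Icc _ _)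
    (differentiable_sinRatio hr0 hr1).continuous.continuousOn
    (differentiable_sinRatio hr0 hr1).differentiableOn fun x hx => ?_
  rw [interior_Icc] at hx
  have hcos : -r ≤ cos x := by
    rw [← cos_sinRatioPeak (by linarith) hr1.le]
    exact cos_le_cos_of_nonneg_of_le_pi hx.1.le hpeak.2 hx.2.le
  rw [deriv_sinRatio hr0 hr1, sinRatioDeriv]
  exact div_nonneg (mul_nonneg hr0 (by linarith)) (sq_nonneg _)

lemma antitoneOn_sinRatio {r : ℝ} (hr0 : 0 ≤ r) (hr1 : r < 1) :
    AntitoneOn (sinRatio r) (Icc (sinRatioPeak r) π) := by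
  have hpeak := sinRatioPeak_mem_Icc r
  refine antitoneOn_of_deriv_nonpos (convex_Icc _ _)
    (differentiable_sinRatio hr0 hr1).continuous.continuousOn
    (differentiable_sinRatio hr0 hr1).differentiableOn fun x hx => ?_
  rw [interior_Icc] at hx
  have hcos : cos x ≤ -r := by
    rw [← cos_sinRatioPeak (by linarith) hr1.le]
    exact cos_le_cos_of_nonneg_of_le_pi hpeak.1 hx.2.le hx.1.le
  rw [deriv_sinRatio hr0 hr1, sinRatioDeriv]
  exact div_nonpos_of_nonpos_of_nonneg (mul_nonpos_of_nonneg_of_nonpos hr0 (by linarith))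
    (sq_nonneg _)

lemma min_le_sinRatio {r θ₁ θ₂ s : ℝ} (hr0 : 0 ≤ r) (hr1 : r < 1)
    (hθ₁ : θ₁ ∈ Icc 0 (sinRatioPeak r)) (hθ₂ : θ₂ ∈ Icc (sinRatioPeak r) π)
    (hs : s ∈ Icc θ₁ θ₂) : min (sinRatio r θ₁) (sinRatio r θ₂) ≤ sinRatio r s := by
  rcases le_total s (sinRatioPeak r) with hsp | hsp
  · exact (min_le_left _ _).trans
      (monotoneOn_sinRatio hr0 hr1 hθ₁ ⟨hθ₁.1.trans hs.1, hsp⟩ hs.1)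
  · exact (min_le_right _ _).trans
      (antitoneOn_sinRatio hr0 hr1 ⟨hsp, hs.2.trans hθ₂.2⟩ hθ₂ hs.2)

section

variable {r θ₁ θ₂ : ℝ} {G : ℝ → ℝ}

lemma existsUnique_eq_sinRatio_near_zero (hr0 : 0 ≤ r) (hr1 : r < 1)
    (hθ₁ : θ₁ ∈ Ioo 0 (sinRatioPeak r)) (hG : Differentiable ℝ G)
    (hbd : ∀ s, |G s| < sinRatio r θ₁)
    (hbd' : ∀ s, deriv G s < min (sinRatioDeriv r 1) (sinRatioDeriv r (cos θ₁))) :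
    ∃! s, s ∈ Ioo (-θ₁) θ₁ ∧ G s = sinRatio r s := by
  have hθ₁π : θ₁ ≤ π := hθ₁.2.le.trans (sinRatioPeak_mem_Icc r).2
  have hcos₁ : -r < cos θ₁ :=
    neg_lt_cos_of_lt_sinRatioPeak (by linarith) hr1.le ⟨hθ₁.1.le, hθ₁.2⟩
  have hdiff : Differentiable ℝ (sinRatio r - G) := (differentiable_sinRatio hr0 hr1).sub hG
  have hmono : StrictMonoOn (sinRatio r - G) (Icc (-θ₁) θ₁) := by
    refine strictMonoOn_of_deriv_pos (convex_Icc _ _) hdiff.continuous.continuousOn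
      fun x hx => ?_
    rw [interior_Icc] at hx
    have hcos : cos θ₁ ≤ cos x :=
      cos_le_cos_of_abs_le (abs_le.2 ⟨hx.1.le, hx.2.le⟩) hθ₁π
    rw [deriv_sub (differentiable_sinRatio hr0 hr1 x) (hG x), deriv_sinRatio hr0 hr1]
    linarith [min_sinRatioDeriv_le hr0 hr1 hcos₁ hcos (cos_le_one x), hbd' x]
  have hleft : (sinRatio r - G) (-θ₁) < 0 := by
    simp only [Pi.sub_apply, sinRatio_neg]
    linarith [neg_abs_le (G (-θ₁)), hbd (-θ₁)]
  have hright : 0 < (sinRatio r - G) θ₁ := by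
    simp only [Pi.sub_apply]
    linarith [le_abs_self (G θ₁), hbd θ₁]
  refine (existsUnique_congr fun s => ?_).1
    (hmono.existsUnique_mem_Ioo_eq (by linarith [hθ₁.1]) hdiff.continuous.continuousOn
      hleft hright)
  rw [Pi.sub_apply, sub_eq_zero, eq_comm]

lemma existsUnique_eq_sinRatio_near_pi (hr0 : 0 ≤ r) (hr1 : r < 1)
    (hθ₂ : θ₂ ∈ Ioo (sinRatioPeak r) π) (hG : Differentiable ℝ G)
    (hbd : ∀ s, |G s| < sinRatio r θ₂)
    (hbd' : ∀ s, sinRatioDeriv r (cos θ₂) < deriv G s) :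
    ∃! s, s ∈ Ioo θ₂ (2 * π - θ₂) ∧ G s = sinRatio r s := by
  have hθ₂0 : 0 ≤ θ₂ := (sinRatioPeak_mem_Icc r).1.trans hθ₂.1.le
  have hcos₂ : cos θ₂ < -r :=
    cos_lt_neg_of_sinRatioPeak_lt (by linarith) hr1.le ⟨hθ₂.1, hθ₂.2.le⟩
  have hdiff : Differentiable ℝ (G - sinRatio r) := hG.sub (differentiable_sinRatio hr0 hr1)
  have hmono : StrictMonoOn (G - sinRatio r) (Icc θ₂ (2 * π - θ₂)) := by
    refine strictMonoOn_of_deriv_pos (convex_Icc _ _) hdiff.continuous.continuousOn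
      fun x hx => ?_
    rw [interior_Icc] at hx
    have hcos : cos x ≤ cos θ₂ :=
      cos_le_cos_of_abs_sub_pi_le (abs_le.2 ⟨by linarith [hx.1], by linarith [hx.2]⟩) hθ₂0
    rw [deriv_sub (hG x) (differentiable_sinRatio hr0 hr1 x), deriv_sinRatio hr0 hr1]
    linarith [sinRatioDeriv_le_sinRatioDeriv hr0 hr1 (neg_one_le_cos x) hcos hcos₂.le, hbd' x]
  have hleft : (G - sinRatio r) θ₂ < 0 := by
    simp only [Pi.sub_apply]
    linarith [le_abs_self (G θ₂), hbd θ₂]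
  have hright : 0 < (G - sinRatio r) (2 * π - θ₂) := by
    simp only [Pi.sub_apply, sinRatio_two_pi_sub]
    linarith [neg_abs_le (G (2 * π - θ₂)), hbd (2 * π - θ₂)]
  refine (existsUnique_congr fun s => ?_).1
    (hmono.existsUnique_mem_Ioo_eq (by linarith [hθ₂.2]) hdiff.continuous.continuousOn
      hleft hright)
  rw [Pi.sub_apply, sub_eq_zero]

lemma ne_sinRatio_of_mem_Icc (hr0 : 0 ≤ r) (hr1 : r < 1)
    (hθ₁ : θ₁ ∈ Icc 0 (sinRatioPeak r)) (hθ₂ : θ₂ ∈ Icc (sinRatioPeak r) π)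
    (hbd : ∀ s, |G s| < min (sinRatio r θ₁) (sinRatio r θ₂)) {s : ℝ}
    (hs : s ∈ Icc θ₁ θ₂ ∪ Icc (2 * π - θ₂) (2 * π - θ₁)) :
    G s ≠ sinRatio r s := by
  obtain ⟨hlow, hup⟩ := abs_lt.1 (hbd s)
  rcases hs with hs | hs
  · exact (hup.trans_le (min_le_sinRatio hr0 hr1 hθ₁ hθ₂ hs)).ne
  · have hs' : 2 * π - s ∈ Icc θ₁ θ₂ := ⟨by linarith [hs.2], by linarith [hs.1]⟩
    have hsym : sinRatio r s = -sinRatio r (2 * π - s) := by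
      rw [sinRatio_two_pi_sub, neg_neg]
    rw [hsym]
    exact (neg_le_neg (min_le_sinRatio hr0 hr1 hθ₁ hθ₂ hs')).trans_lt hlow |>.ne'

end

theorem stmt16_general (q : ℝ) (hq1 : q < 1)
    (h g : ℝ → ℝ)
    (hh : ∀ t, h t = sqrt q * sin t / (1 + sqrt q * cos t))
    (hg : ContDiff ℝ 1 g)
    (θ1 θ2 : ℝ)
    (hθ1 : θ1 ∈ Set.Ioo 0 (π - arccos (sqrt q)))
    (hθ2 : θ2 ∈ Set.Ioo (π - arccos (sqrt q)) π)
    (hbd : ∀ t, |g t| < min (h θ1) (h θ2))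
    (hbd' : ∀ t, deriv h θ2 < deriv g t ∧ deriv g t < min (deriv h 0) (deriv h θ1)) :
    ∀ Θ : ℝ,
      (∃! t : ℝ, t - Θ ∈ Set.Ioo (-θ1) θ1 ∧ g t = h (t - Θ)) ∧
      (∃! t : ℝ, t - Θ ∈ Set.Ioo θ2 (2 * π - θ2) ∧ g t = h (t - Θ)) ∧
      (∀ t : ℝ, t - Θ ∈ Set.Icc θ1 θ2 ∪ Set.Icc (2 * π - θ2) (2 * π - θ1) →
        g t ≠ h (t - Θ)) := by
  intro Θ
  obtain rfl : h = sinRatio (sqrt q) := funext hh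
  set r := sqrt q
  have hr0 : 0 ≤ r := sqrt_nonneg q
  have hr1 : r < 1 := (sqrt_lt' one_pos).2 (by rwa [one_pow])
  simp only [deriv_sinRatio hr0 hr1, cos_zero] at hbd'
  set G : ℝ → ℝ := fun s => g (s + Θ)
  have hG : Differentiable ℝ G :=
    (hg.differentiable one_ne_zero).comp (differentiable_id.add_const Θ)
  have hG' : ∀ s, deriv G s = deriv g (s + Θ) := fun s => deriv_comp_add_const ..
  have hbdG : ∀ s, |G s| < min (sinRatio r θ1) (sinRatio r θ2) := fun s => hbd (s + Θ)
  have hshift : ∀ t, g t = G (t - Θ) := fun t => by simp only [G, sub_add_cancel]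
  simp only [hshift]
  refine ⟨?_, ?_, fun t => ne_sinRatio_of_mem_Icc hr0 hr1 (Ioo_subset_Icc_self hθ1)
    (Ioo_subset_Icc_self hθ2) hbdG⟩
  · exact ((Equiv.subRight Θ).existsUnique_congr fun t => Iff.rfl).2 <|
      existsUnique_eq_sinRatio_near_zero hr0 hr1 hθ1 hG
        (fun s => (hbdG s).trans_le (min_le_left _ _)) fun s => hG' s ▸ (hbd' (s + Θ)).2
  · exact ((Equiv.subRight Θ).existsUnique_congr fun t => Iff.rfl).2 <|
      existsUnique_eq_sinRatio_near_pi hr0 hr1 hθ2 hG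
        (fun s => (hbdG s).trans_le (min_le_right _ _)) fun s => hG' s ▸ (hbd' (s + Θ)).1

theorem stmt16 (q : ℝ) (hq0 : 0 < q) (hq1 : q < 1)
    (h g : ℝ → ℝ)
    (hh : ∀ t, h t = sqrt q * sin t / (1 + sqrt q * cos t))
    (hg : ContDiff ℝ 1 g) (hper : Function.Periodic g (2 * π))
    (θ1 θ2 : ℝ)
    (hθ1 : θ1 ∈ Set.Ioo 0 (π - arccos (sqrt q)))
    (hθ2 : θ2 ∈ Set.Ioo (π - arccos (sqrt q)) π)
    (hbd : ∀ t, |g t| < min (h θ1) (h θ2))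
    (hbd' : ∀ t, deriv h θ2 < deriv g t ∧ deriv g t < min (deriv h 0) (deriv h θ1)) :
    ∀ Θ : ℝ,
      (∃! t : ℝ, t - Θ ∈ Set.Ioo (-θ1) θ1 ∧ g t = h (t - Θ)) ∧
      (∃! t : ℝ, t - Θ ∈ Set.Ioo θ2 (2 * π - θ2) ∧ g t = h (t - Θ)) ∧
      (∀ t : ℝ, t - Θ ∈ Set.Icc θ1 θ2 ∪ Set.Icc (2 * π - θ2) (2 * π - θ1) →
        g t ≠ h (t - Θ)) :=
  stmt16_general q hq1 h g hh hg θ1 θ2 hθ1 hθ2 hbd hbd'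
end

section
/- Let e ∈ (0,1), q > 0 with e²q > 0, and Θ ∈ ℝ with sinΘ ≠ 0. With A_l = A((−1)^{l−1}Θ) as above, the quantity f_{j,l}/(e·a·sinΘ) − 1 = (−1)^{j−1}·(−(−1)^{l−1}cosΘ + 1/(e√q))/A_l, where f_{j,l} = ρ(θ_{j,l})·sin(θ_{j,l} − Θ) is computed from the explicit ellipse formulas. Consequently, f_{1,l} = f_{2,l} if and only if (−1)^{l−1}·cosΘ = 1/(e√q). -/
open Real

/-!
Write `r = √q`, `(C, S) = ±(cos Θ, sin Θ)` and `D = A + σ (C - e / r)`, where `σ = ±1`;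
`D > 0` because `A² - (C - e / r)² = (1 - e²) B`. Using `A² = B - S²` one finds
`1 + e c = A D / B` and `s C - c S = S (1 - e C / r + σ A e / r) / (e B)`, and the factorisation
`(1 - e²) (1 - e C / r + σ A e / r) = e² D (A + σ (1 / (e r) - C))` collapses `ρ(θ) (s C - c S)`
to `e a S (1 + σ (1 / (e r) - C) / A)`. The two values for `σ = ±1` therefore differ by
`2 e a S (1 / (e r) - C) / A`.
-/

theorem one_div_sq_add_one_div_sq_sub_sub_sq_pos {e r C S : ℝ} (he0 : 0 < e) (he1 : e < 1)
    (hr : 0 < r) (hCS : C ^ 2 + S ^ 2 = 1) (hS : S ≠ 0) :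
    0 < 1 / e ^ 2 + 1 / r ^ 2 - 2 * C / (e * r) - S ^ 2 := by
  have hC : C < 1 := by nlinarith [sq_pos_of_ne_zero hS]
  have hx : 1 < e⁻¹ := (one_lt_inv₀ he0).2 he1
  have hy : 0 < r⁻¹ := inv_pos.2 hr
  have hsplit : 1 / e ^ 2 + 1 / r ^ 2 - 2 * C / (e * r) - S ^ 2
      = (e⁻¹ * r⁻¹ - C) ^ 2 + (e⁻¹ ^ 2 - 1) * (1 - r⁻¹ ^ 2) := by
    field_simp
    linear_combination (-(e ^ 2 * r ^ 2)) * hCS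
  rw [hsplit]
  rcases le_or_gt 1 (e⁻¹ * r⁻¹) with h | h
  · -- with `x = e⁻¹`, `y = r⁻¹`: `(xy - C)² + (x² - 1)(1 - y²) = (1 - C)(2xy - 1 - C) + (x - y)²`
    nlinarith [sq_nonneg (e⁻¹ - r⁻¹)]
  · have : r⁻¹ < 1 := by nlinarith
    have : 0 < (e⁻¹ ^ 2 - 1) * (1 - r⁻¹ ^ 2) := by apply mul_pos <;> nlinarith
    positivity

theorem ellipse_mul_cross_eq {a e r C S σ A B c s : ℝ} (he0 : 0 < e) (he1 : e < 1)
    (hr : 0 < r) (hσ : σ ^ 2 = 1) (hCS : C ^ 2 + S ^ 2 = 1)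
    (hB : B = 1 / e ^ 2 + 1 / r ^ 2 - 2 * C / (e * r))
    (hA0 : 0 < A) (hA2 : A ^ 2 = B - S ^ 2)
    (hc : c = (-S ^ 2 + σ * (C - e / r) * A) / (e * B))
    (hs : s = S * (C - e / r + σ * A) / (e * B)) :
    a * (1 - e ^ 2) / (1 + e * c) * (s * C - c * S) =
      e * a * S * (A + σ * (1 / (e * r) - C)) / A := by
  have hB0 : 0 < B := by nlinarith
  have hA2e : e ^ 2 * r ^ 2 * A ^ 2 = r ^ 2 + e ^ 2 - 2 * C * e * r - e ^ 2 * r ^ 2 * S ^ 2 := by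
    rw [hA2, hB]; field_simp
  set D := A * r + σ * (C * r - e)
  have hD : 0 < D := by
    have hgap : (σ * (C * r - e)) ^ 2 < (A * r) ^ 2 := by
      have : (A * r) ^ 2 - (C * r - e) ^ 2 = (1 - e ^ 2) * B * r ^ 2 := by
        rw [mul_pow, hA2, hB]; field_simp; linear_combination (-(e ^ 2 * r ^ 2)) * hCS
      rw [mul_pow σ, hσ]
      nlinarith [mul_pos (mul_pos (by nlinarith : 0 < 1 - e ^ 2) hB0) (pow_pos hr 2)]
    linarith [(abs_lt_of_sq_lt_sq' hgap (by positivity)).1]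
  have h1ec : 1 + e * c = A * D / (B * r) := by
    rw [hc]; field_simp; linear_combination (-r) * hA2
  have hcross : s * C - c * S = S * (r - C * e + σ * A * e) / (e * B * r) := by
    rw [hs, hc]; field_simp; linear_combination r * S * hCS
  have hfactor : r * (1 - e ^ 2) * (r - C * e + σ * A * e)
      = e * D * (e * r * A + σ * (1 - C * e * r)) := by
    linear_combination (-e * (C * r - e) * (1 - C * e * r)) * hσ - hA2e + e ^ 2 * r ^ 2 * hCS
  have hD0 := hD.ne'
  calc a * (1 - e ^ 2) / (1 + e * c) * (s * C - c * S)
      = a * S * (r * (1 - e ^ 2) * (r - C * e + σ * A * e)) / (e * r * A * D) := by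
        rw [h1ec, hcross]; field_simp
    _ = e * a * S * (A + σ * (1 / (e * r) - C)) / A := by
        rw [hfactor]; field_simp

theorem ellipse_div_sub_one_eq {a e q Θ δ σ A B c s f : ℝ} (ha : a ≠ 0) (he0 : 0 < e)
    (he1 : e < 1) (hq : 0 < q) (hsin : sin Θ ≠ 0) (hδ : δ ^ 2 = 1) (hσ : σ ^ 2 = 1)
    (hB : B = 1 / e ^ 2 + 1 / q - 2 * (δ * cos Θ) / (e * √q))
    (hA : A = √(B - (δ * sin Θ) ^ 2))
    (hc : c = (-(δ * sin Θ) ^ 2 + σ * (δ * cos Θ - e / √q) * A) / (e * B))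
    (hs : s = δ * sin Θ * (δ * cos Θ - e / √q + σ * A) / (e * B))
    (hf : f = a * (1 - e ^ 2) / (1 + e * c) * (s * cos Θ - c * sin Θ)) :
    f / (e * a * sin Θ) - 1 = σ * (-δ * cos Θ + 1 / (e * √q)) / A ∧ 0 < A := by
  have hr : 0 < √q := sqrt_pos.2 hq
  rw [show 1 / q = 1 / √q ^ 2 by rw [sq_sqrt hq.le]] at hB
  have hCS : (δ * cos Θ) ^ 2 + (δ * sin Θ) ^ 2 = 1 := by
    linear_combination (cos Θ ^ 2 + sin Θ ^ 2) * hδ + cos_sq_add_sin_sq Θ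
  have hδ0 : δ ≠ 0 := by rintro rfl; norm_num at hδ
  have hdisc := one_div_sq_add_one_div_sq_sub_sub_sq_pos he0 he1 hr hCS (mul_ne_zero hδ0 hsin)
  rw [← hB] at hdisc
  have hA0 : 0 < A := hA ▸ sqrt_pos.2 hdisc
  have hcross := ellipse_mul_cross_eq (a := a) he0 he1 hr hσ hCS hB hA0
    (hA ▸ sq_sqrt hdisc.le) hc hs
  have hf' : f = e * a * sin Θ * (A + σ * (1 / (e * √q) - δ * cos Θ)) / A := by
    apply mul_left_cancel₀ hδ0
    rw [hf]
    linear_combination hcross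
  refine ⟨?_, hA0⟩
  rw [hf']
  field_simp
  ring

theorem eq_iff_eq_zero_of_div_sub_one {x y k X A : ℝ} (hk : k ≠ 0) (hA : A ≠ 0)
    (hx : x / k - 1 = X / A) (hy : y / k - 1 = -X / A) : x = y ↔ X = 0 := by
  rw [← div_left_inj' hk, ← sub_left_inj (a := 1), hx, hy, neg_div, self_eq_neg,
    div_eq_zero_iff, or_iff_left hA]

theorem stmt18_general (a e q Θ : ℝ) (ha : 0 < a) (he0 : 0 < e) (he1 : e < 1)
    (hq : 0 < q) (hsin : sin Θ ≠ 0)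
    (Θl B A : ℕ → ℝ) (c s f : ℕ → ℕ → ℝ)
    (hΘl : ∀ l, Θl l = Θ + ((l : ℝ) - 1) * π)
    (hB : ∀ l, B l = 1 / e ^ 2 + 1 / q - 2 * cos (Θl l) / (e * sqrt q))
    (hA : ∀ l, A l = sqrt (B l - sin (Θl l) ^ 2))
    (hc : ∀ j l, c j l =
      (-sin (Θl l) ^ 2 + (-1 : ℝ) ^ (j - 1) * (cos (Θl l) - e / sqrt q) * A l) / (e * B l))
    (hs : ∀ j l, s j l =
      sin (Θl l) * (cos (Θl l) - e / sqrt q + (-1 : ℝ) ^ (j - 1) * A l) / (e * B l))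
    (hf : ∀ j l, f j l =
      (a * (1 - e ^ 2) / (1 + e * c j l)) * (s j l * cos Θ - c j l * sin Θ)) :
    (∀ j ∈ ({1, 2} : Set ℕ), ∀ l ∈ ({1, 2} : Set ℕ),
      f j l / (e * a * sin Θ) - 1 =
        (-1 : ℝ) ^ (j - 1) * (-(-1 : ℝ) ^ (l - 1) * cos Θ + 1 / (e * sqrt q)) / A l) ∧
    (∀ l ∈ ({1, 2} : Set ℕ),
      (f 1 l = f 2 l ↔ (-1 : ℝ) ^ (l - 1) * cos Θ = 1 / (e * sqrt q))) := by
  have hsign : ∀ n : ℕ, ((-1 : ℝ) ^ n) ^ 2 = 1 := fun n => by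
    rw [← pow_mul, mul_comm, pow_mul, neg_one_sq, one_pow]
  have hratio : ∀ j, ∀ l ∈ ({1, 2} : Set ℕ), f j l / (e * a * sin Θ) - 1 =
      (-1 : ℝ) ^ (j - 1) * (-(-1 : ℝ) ^ (l - 1) * cos Θ + 1 / (e * √q)) / A l ∧ 0 < A l := by
    intro j l hl
    have hl1 : 1 ≤ l := by rcases hl with rfl | rfl <;> norm_num
    have hΘ : Θl l = Θ + ((l - 1 : ℕ) : ℝ) * π := by rw [hΘl, Nat.cast_sub hl1, Nat.cast_one]
    exact ellipse_div_sub_one_eq ha.ne' he0 he1 hq hsin (hsign (l - 1)) (hsign (j - 1))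
      ((hB l).trans (by rw [hΘ, cos_add_nat_mul_pi]))
      ((hA l).trans (by rw [hΘ, sin_add_nat_mul_pi]))
      ((hc j l).trans (by rw [hΘ, cos_add_nat_mul_pi, sin_add_nat_mul_pi]))
      ((hs j l).trans (by rw [hΘ, cos_add_nat_mul_pi, sin_add_nat_mul_pi])) (hf j l)
  refine ⟨fun j _ l hl => (hratio j l hl).1, fun l hl => ?_⟩
  obtain ⟨h1, hA0⟩ := hratio 1 l hl
  obtain ⟨h2, -⟩ := hratio 2 l hl
  rw [Nat.sub_self, pow_zero, one_mul] at h1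
  rw [show 2 - 1 = 1 from rfl, pow_one, neg_one_mul] at h2
  rw [eq_iff_eq_zero_of_div_sub_one (mul_ne_zero (by positivity) hsin) hA0.ne' h1 h2, neg_mul,
    neg_add_eq_zero]

theorem stmt18 (a e q Θ : ℝ) (ha : 0 < a) (he0 : 0 < e) (he1 : e < 1)
    (hq : 0 < q) (hqe : q ≠ e ^ 2) (hsin : sin Θ ≠ 0)
    (Θl B A : ℕ → ℝ) (c s f : ℕ → ℕ → ℝ)
    (hΘl : ∀ l, Θl l = Θ + ((l : ℝ) - 1) * π)
    (hB : ∀ l, B l = 1 / e ^ 2 + 1 / q - 2 * cos (Θl l) / (e * sqrt q))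
    (hA : ∀ l, A l = sqrt (B l - sin (Θl l) ^ 2))
    (hc : ∀ j l, c j l =
      (-sin (Θl l) ^ 2 + (-1 : ℝ) ^ (j - 1) * (cos (Θl l) - e / sqrt q) * A l) / (e * B l))
    (hs : ∀ j l, s j l =
      sin (Θl l) * (cos (Θl l) - e / sqrt q + (-1 : ℝ) ^ (j - 1) * A l) / (e * B l))
    (hf : ∀ j l, f j l =
      (a * (1 - e ^ 2) / (1 + e * c j l)) * (s j l * cos Θ - c j l * sin Θ)) :
    (∀ j ∈ ({1, 2} : Set ℕ), ∀ l ∈ ({1, 2} : Set ℕ),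
      f j l / (e * a * sin Θ) - 1 =
        (-1 : ℝ) ^ (j - 1) * (-(-1 : ℝ) ^ (l - 1) * cos Θ + 1 / (e * sqrt q)) / A l) ∧
    (∀ l ∈ ({1, 2} : Set ℕ),
      (f 1 l = f 2 l ↔ (-1 : ℝ) ^ (l - 1) * cos Θ = 1 / (e * sqrt q))) :=
  stmt18_general a e q Θ ha he0 he1 hq hsin Θl B A c s f hΘl hB hA hc hs hf
end

section
/- Let e ∈ (0,1), q > 0, q ≠ e², and Θ with sinΘ·cosΘ ≠ 0. With f_{j,l} as defined from the ellipse stationary points, (f_{1,1} − f_{2,2})/(e·a·sinΘ) = 4·(1/e² − 1)·(1 − 1/q)·cosΘ / (e√q·A₁·A₂·(A₁(cosΘ + 1/(e√q)) + A₂(cosΘ − 1/(e√q)))), and in particular f_{1,1} ≠ f_{2,2} whenever the denominator is nonzero and q ≠ 1. -/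
/-!
Write `c = cos Θ` and `k = 1 / (e √q)`. Up to the common summand `1`, the normalised values of
`f₁₁` and `f₂₂` are `(k - c) / A₁` and `-(c + k) / A₂`, while `A₁², A₂² = P ∓ 2ck` with
`P = 1/e² + 1/q - sin² Θ`. Multiplying the difference by the conjugate `A₁ (c + k) + A₂ (c - k)`
leaves the numerator `A₁² (c + k)² - A₂² (c - k)² = 4ck (P - c² - k²)`, and
`P - c² - k² = (1/e² - 1)(1 - 1/q)` because `sin² Θ + cos² Θ = 1`.
-/

open Real

theorem div_sub_div_eq_sq_sub_sq_div {K : Type*} [Field K] {A₁ A₂ u v : K}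
    (h₁ : A₁ ≠ 0) (h₂ : A₂ ≠ 0) (hD : A₁ * u + A₂ * v ≠ 0) :
    u / A₂ - v / A₁ =
      (A₁ ^ 2 * u ^ 2 - A₂ ^ 2 * v ^ 2) / (A₁ * A₂ * (A₁ * u + A₂ * v)) := by
  rw [eq_div_iff (mul_ne_zero (mul_ne_zero h₁ h₂) hD)]
  field_simp
  ring

theorem sq_mul_add_sq_sub_sq_mul_sub_sq {R : Type*} [CommRing R] {A₁ A₂ P c k : R}
    (h₁ : A₁ ^ 2 = P - 2 * c * k) (h₂ : A₂ ^ 2 = P + 2 * c * k) :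
    A₁ ^ 2 * (c + k) ^ 2 - A₂ ^ 2 * (c - k) ^ 2 = 4 * c * k * (P - c ^ 2 - k ^ 2) := by
  linear_combination (c + k) ^ 2 * h₁ - (c - k) ^ 2 * h₂

theorem sq_eq_of_eq_sqrt_of_pos {x y : ℝ} (h : x = sqrt y) (hx : 0 < x) : x ^ 2 = y := by
  rw [h, sq_sqrt (sqrt_pos.mp (h ▸ hx)).le]

theorem one_div_sq_add_one_div_sub_sin_sq_sub {e q : ℝ} (he : e ≠ 0) (hq : 0 < q) (Θ : ℝ) :
    1 / e ^ 2 + 1 / q - sin Θ ^ 2 - cos Θ ^ 2 - (1 / (e * sqrt q)) ^ 2 =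
      (1 / e ^ 2 - 1) * (1 - 1 / q) := by
  rw [div_pow, mul_pow, sq_sqrt hq.le]
  field_simp
  linear_combination -(e ^ 2 * q) * sin_sq_add_cos_sq Θ

theorem cos_add_div_sub_cos_sub_div_eq {e q Θ A₁ A₂ : ℝ} (he : e ≠ 0) (hq : 0 < q)
    (h₁ : A₁ ≠ 0) (h₂ : A₂ ≠ 0)
    (hA₁ : A₁ ^ 2 = (1 / e ^ 2 + 1 / q - sin Θ ^ 2) - 2 * cos Θ * (1 / (e * sqrt q)))
    (hA₂ : A₂ ^ 2 = (1 / e ^ 2 + 1 / q - sin Θ ^ 2) + 2 * cos Θ * (1 / (e * sqrt q)))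
    (hD : A₁ * (cos Θ + 1 / (e * sqrt q)) + A₂ * (cos Θ - 1 / (e * sqrt q)) ≠ 0) :
    (cos Θ + 1 / (e * sqrt q)) / A₂ - (cos Θ - 1 / (e * sqrt q)) / A₁ =
      4 * (1 / e ^ 2 - 1) * (1 - 1 / q) * cos Θ /
        (e * sqrt q * A₁ * A₂ *
          (A₁ * (cos Θ + 1 / (e * sqrt q)) + A₂ * (cos Θ - 1 / (e * sqrt q)))) := by
  rw [div_sub_div_eq_sq_sub_sq_div h₁ h₂ hD, sq_mul_add_sq_sub_sq_mul_sub_sq hA₁ hA₂,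
    one_div_sq_add_one_div_sub_sin_sq_sub he hq]
  generalize A₁ * (cos Θ + 1 / (e * sqrt q)) + A₂ * (cos Θ - 1 / (e * sqrt q)) = D
  ring

theorem stmt19_general (a e q Θ : ℝ) (he0 : 0 < e) (he1 : e < 1)
    (hq : 0 < q) (hq1 : q ≠ 1) (hsc : sin Θ * cos Θ ≠ 0)
    (Θl B A : ℕ → ℝ) (f : ℕ → ℕ → ℝ)
    (hΘl : ∀ l, Θl l = Θ + ((l : ℝ) - 1) * π)
    (hB : ∀ l, B l = 1 / e ^ 2 + 1 / q - 2 * cos (Θl l) / (e * sqrt q))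
    (hA : ∀ l, A l = sqrt (B l - sin Θ ^ 2))
    (hApos : ∀ l, 0 < A l)
    (hf : ∀ j l, f j l / (e * a * sin Θ) =
      1 + (-1 : ℝ) ^ (j - 1) * (-(-1 : ℝ) ^ (l - 1) * cos Θ + 1 / (e * sqrt q)) / A l)
    (hden : A 1 * (cos Θ + 1 / (e * sqrt q)) + A 2 * (cos Θ - 1 / (e * sqrt q)) ≠ 0) :
    (f 1 1 - f 2 2) / (e * a * sin Θ) =
      4 * (1 / e ^ 2 - 1) * (1 - 1 / q) * cos Θ /
        (e * sqrt q * A 1 * A 2 *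
          (A 1 * (cos Θ + 1 / (e * sqrt q)) + A 2 * (cos Θ - 1 / (e * sqrt q)))) ∧
    f 1 1 ≠ f 2 2 := by
  have hA₁ : A 1 ^ 2 = (1 / e ^ 2 + 1 / q - sin Θ ^ 2) - 2 * cos Θ * (1 / (e * sqrt q)) := by
    rw [sq_eq_of_eq_sqrt_of_pos (hA 1) (hApos 1), hB, hΘl]
    norm_num
    ring
  have hA₂ : A 2 ^ 2 = (1 / e ^ 2 + 1 / q - sin Θ ^ 2) + 2 * cos Θ * (1 / (e * sqrt q)) := by
    rw [sq_eq_of_eq_sqrt_of_pos (hA 2) (hApos 2), hB, hΘl]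
    norm_num [cos_add_pi]
    ring
  have hdiff : (f 1 1 - f 2 2) / (e * a * sin Θ) =
      (cos Θ + 1 / (e * sqrt q)) / A 2 - (cos Θ - 1 / (e * sqrt q)) / A 1 := by
    rw [sub_div, hf, hf]
    norm_num
    ring
  have hmain := hdiff.trans <|
    cos_add_div_sub_cos_sub_div_eq he0.ne' hq (hApos 1).ne' (hApos 2).ne' hA₁ hA₂ hden
  refine ⟨hmain, fun hf₁₂ => ?_⟩
  have he : 1 / e ^ 2 - 1 ≠ 0 :=
    (sub_pos.mpr (one_lt_one_div (by positivity) (by nlinarith))).ne'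
  have hq' : 1 - 1 / q ≠ 0 := sub_ne_zero.mpr fun h => hq1 (by field_simp at h; linarith)
  have hnum :=
    mul_ne_zero (mul_ne_zero (mul_ne_zero four_ne_zero he) hq') (right_ne_zero_of_mul hsc)
  have hdenom := mul_ne_zero
    (mul_pos (mul_pos (mul_pos he0 (sqrt_pos.mpr hq)) (hApos 1)) (hApos 2)).ne' hden
  rw [hf₁₂, sub_self, zero_div] at hmain
  exact div_ne_zero hnum hdenom hmain.symm

theorem stmt19 (a e q Θ : ℝ) (ha : 0 < a) (he0 : 0 < e) (he1 : e < 1)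
    (hq : 0 < q) (hqe : q ≠ e ^ 2) (hq1 : q ≠ 1) (hsc : sin Θ * cos Θ ≠ 0)
    (Θl B A : ℕ → ℝ) (f : ℕ → ℕ → ℝ)
    (hΘl : ∀ l, Θl l = Θ + ((l : ℝ) - 1) * π)
    (hB : ∀ l, B l = 1 / e ^ 2 + 1 / q - 2 * cos (Θl l) / (e * sqrt q))
    (hA : ∀ l, A l = sqrt (B l - sin Θ ^ 2))
    (hApos : ∀ l, 0 < A l)
    (hf : ∀ j l, f j l / (e * a * sin Θ) =
      1 + (-1 : ℝ) ^ (j - 1) * (-(-1 : ℝ) ^ (l - 1) * cos Θ + 1 / (e * sqrt q)) / A l)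
    (hden : A 1 * (cos Θ + 1 / (e * sqrt q)) + A 2 * (cos Θ - 1 / (e * sqrt q)) ≠ 0) :
    (f 1 1 - f 2 2) / (e * a * sin Θ) =
      4 * (1 / e ^ 2 - 1) * (1 - 1 / q) * cos Θ /
        (e * sqrt q * A 1 * A 2 *
          (A 1 * (cos Θ + 1 / (e * sqrt q)) + A 2 * (cos Θ - 1 / (e * sqrt q)))) ∧
    f 1 1 ≠ f 2 2 :=
  stmt19_general a e q Θ he0 he1 hq hq1 hsc Θl B A f hΘl hB hA hApos hf hden
end
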